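/- If K is the Laplacian kernel K(u) = e^{−|u|}/2 and K_h(u) = (1/h)K(u/h) for h > 0, then the convolution ℓ_h = ρ_τ * K_h satisfies ℓ_h(u) = ρ_τ(u) + (h/2)e^{−|u|/h} for all real u. -/

import Mathlib

open MeasureTheory Set Filter Topology

/-- The quantile check function ρ_τ. -/
noncomputable def checkFn (τ u : ℝ) : ℝ := u * (τ - if u < 0 then 1 else 0)

/-- The Laplacian kernel K(u) = e^{−|u|}/2. -/
noncomputable def lapK (u : ℝ) : ℝ := Real.exp (-|u|) / 2

lemma tendsto_aux (h a b : ℝ) (hh : 0 < h) :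
    Tendsto (fun v : ℝ => (a + b * v) * Real.exp (-(v / h))) atTop (𝓝 0) := by
  have h1 : Tendsto (fun v : ℝ => v / h) atTop atTop := tendsto_id.atTop_div_const hh
  have h2 : Tendsto (fun v : ℝ => (v / h) ^ 1 * Real.exp (-(v / h))) atTop (𝓝 0) :=
    (Real.tendsto_pow_mul_exp_neg_atTop_nhds_zero 1).comp h1
  have h3 : Tendsto (fun v : ℝ => Real.exp (-(v / h))) atTop (𝓝 0) :=
    Real.tendsto_exp_atBot.comp (tendsto_neg_atTop_atBot.comp h1)
  have h4 := (h3.const_mul a).add (h2.const_mul (b * h))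
  simp only [mul_zero, add_zero] at h4
  refine h4.congr fun v => ?_
  field_simp

lemma integrableOn_Ioi_aux (h c : ℝ) (hh : 0 < h) :
    IntegrableOn (fun v : ℝ => v * Real.exp (-(v / h))) (Set.Ioi c) := by
  have h2h : (0:ℝ) < 1 / (2 * h) := by positivity
  refine integrable_of_isBigO_exp_neg h2h ?_ ?_
  · exact (continuous_id.mul (Real.continuous_exp.comp
      ((continuous_id.div_const h).neg))).continuousOn
  · have ht : Tendsto
        (fun v : ℝ => v * Real.exp (-(v / h)) / Real.exp (-(1 / (2 * h)) * v)) atTop (𝓝 0) := by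
      refine (tendsto_aux (2 * h) 0 1 (by positivity)).congr fun v => ?_
      rw [mul_div_assoc, ← Real.exp_sub]
      have : -(v / h) - -(1 / (2 * h)) * v = -(v / (2 * h)) := by field_simp; ring
      rw [this]
      ring
    exact (Asymptotics.isLittleO_of_tendsto
      (fun x hx => absurd hx (Real.exp_ne_zero _)) ht).isBigO

lemma integral_Ioi_aux (h c : ℝ) (hh : 0 < h) :
    ∫ v in Set.Ioi c, v * Real.exp (-(v / h)) = (h * c + h ^ 2) * Real.exp (-(c / h)) := by
  have hderiv : ∀ x ∈ Set.Ici c,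
      HasDerivAt (fun v : ℝ => -((h * v + h ^ 2) * Real.exp (-(v / h))))
        (x * Real.exp (-(x / h))) x := by
    intro x _
    have hx : HasDerivAt (fun v : ℝ => h * v + h ^ 2) h x := by
      simpa using ((hasDerivAt_id x).const_mul h).add_const (h ^ 2)
    have hn : HasDerivAt (fun v : ℝ => -(v / h)) (-(1 / h)) x := by
      simpa [one_div] using ((hasDerivAt_id x).div_const h).fun_neg
    have he : HasDerivAt (fun v : ℝ => Real.exp (-(v / h)))
        (Real.exp (-(x / h)) * -(1 / h)) x := hn.exp
    have := (hx.fun_mul he).fun_neg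
    refine this.congr_deriv ?_
    field_simp
    ring
  have htend : Tendsto (fun v : ℝ => -((h * v + h ^ 2) * Real.exp (-(v / h)))) atTop (𝓝 0) := by
    have := (tendsto_aux h (h ^ 2) h hh).neg
    rw [neg_zero] at this
    exact this.congr fun v => by ring
  have := integral_Ioi_of_hasDerivAt_of_tendsto' hderiv (integrableOn_Ioi_aux h c hh) htend
  rw [this]
  ring

lemma integrableOn_Iic_aux (h c : ℝ) (hh : 0 < h) :
    IntegrableOn (fun v : ℝ => v * Real.exp (v / h)) (Set.Iic c) := by
  have A : MeasurableEmbedding (fun x : ℝ => -x) :=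
    (Homeomorph.neg ℝ).isClosedEmbedding.measurableEmbedding
  have h1 : IntegrableOn (fun v : ℝ => v * Real.exp (-(v / h))) (Set.Ioi (-c)) :=
    integrableOn_Ioi_aux h (-c) hh
  have hpre : (fun x : ℝ => -x) ⁻¹' (Set.Ioi (-c)) = Set.Iio c := by
    ext x; simp
  have hmap : Measure.map (fun x : ℝ => -x) ((volume : Measure ℝ).restrict (Set.Iio c))
      = (volume : Measure ℝ).restrict (Set.Ioi (-c)) := by
    rw [← hpre, ← Measure.restrict_map measurable_neg measurableSet_Ioi,
      Measure.map_neg_eq_self]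
  have h2 : Integrable ((fun x : ℝ => x * Real.exp (-(x / h))) ∘ (fun x : ℝ => -x))
      ((volume : Measure ℝ).restrict (Set.Iio c)) := by
    rw [← A.integrable_map_iff, hmap]; exact h1
  have h3 : IntegrableOn (fun v : ℝ => v * Real.exp (v / h)) (Set.Iio c) := by
    have h2' := h2.neg
    refine (integrable_congr ?_).mpr h2'
    filter_upwards with x
    simp [Function.comp, neg_div, neg_neg, neg_mul]
  rwa [IntegrableOn, ← Measure.restrict_congr_set Iio_ae_eq_Iic]

lemma integral_Iic_aux (h c : ℝ) (hh : 0 < h) :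
    ∫ v in Set.Iic c, v * Real.exp (v / h) = (h * c - h ^ 2) * Real.exp (c / h) := by
  have key : ∫ x in Set.Iic c, x * Real.exp (x / h)
      = ∫ x in Set.Ioi (-c), -(x * Real.exp (-(x / h))) := by
    rw [← integral_comp_neg_Iic c (fun y : ℝ => -(y * Real.exp (-(y / h))))]
    congr 1
    funext x
    rw [neg_div, neg_neg]
    ring
  rw [key, integral_neg, integral_Ioi_aux h (-c) hh, neg_div, neg_neg]
  ring

lemma check_neg (τ w : ℝ) : checkFn τ (-w) = checkFn (1 - τ) w := by
  unfold checkFn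
  rcases lt_trichotomy w 0 with hw | hw | hw
  · rw [if_neg (not_lt.2 (neg_nonneg.2 hw.le)), if_pos hw]
    ring
  · simp [hw]
  · rw [if_pos (neg_lt_zero.2 hw), if_neg (not_lt.2 hw.le)]
    ring

lemma key_nonneg (τ h u : ℝ) (hh : 0 < h) (hu : 0 ≤ u) :
    (∫ v : ℝ, checkFn τ v * ((1/h) * lapK ((v - u)/h))) =
      checkFn τ u + (h/2) * Real.exp (-|u|/h) := by
  have hE := Real.exp_pos (u / h)
  -- pointwise descriptions on the three regions
  have e1 : ∀ v ∈ Set.Iic (0:ℝ),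
      checkFn τ v * ((1/h) * lapK ((v - u)/h))
        = ((τ - 1) * Real.exp (-(u/h)) / (2*h)) * (v * Real.exp (v / h)) := by
    intro v hv
    have hv0 : v ≤ (0:ℝ) := hv
    have habs : |(v - u)/h| = (u - v)/h := by
      rw [abs_of_nonpos (div_nonpos_of_nonpos_of_nonneg (by linarith) hh.le)]; ring
    have hcheck : checkFn τ v = v * (τ - 1) := by
      unfold checkFn
      rcases lt_or_eq_of_le hv0 with hlt | heq
      · rw [if_pos hlt]
      · subst heq; simp
    rw [hcheck]
    simp only [lapK, habs]
    rw [show -((u - v)/h) = v/h + -(u/h) by ring, Real.exp_add]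
    field_simp
  have e2 : ∀ v ∈ Set.Ioc (0:ℝ) u,
      checkFn τ v * ((1/h) * lapK ((v - u)/h))
        = (τ * Real.exp (-(u/h)) / (2*h)) * (v * Real.exp (v / h)) := by
    intro v hv
    have habs : |(v - u)/h| = (u - v)/h := by
      rw [abs_of_nonpos (div_nonpos_of_nonpos_of_nonneg (by linarith [hv.2]) hh.le)]; ring
    have hcheck : checkFn τ v = v * τ := by
      unfold checkFn
      rw [if_neg (not_lt.2 hv.1.le)]
      ring
    rw [hcheck]
    simp only [lapK, habs]
    rw [show -((u - v)/h) = v/h + -(u/h) by ring, Real.exp_add]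
    field_simp
  have e3 : ∀ v ∈ Set.Ioi u,
      checkFn τ v * ((1/h) * lapK ((v - u)/h))
        = (τ * Real.exp (u/h) / (2*h)) * (v * Real.exp (-(v / h))) := by
    intro v hv
    have hv' : u < v := hv
    have habs : |(v - u)/h| = (v - u)/h := by
      rw [abs_of_nonneg (div_nonneg (by linarith) hh.le)]
    have hcheck : checkFn τ v = v * τ := by
      unfold checkFn
      rw [if_neg (not_lt.2 (by linarith))]
      ring
    rw [hcheck]
    simp only [lapK, habs]
    rw [show -((v - u)/h) = -(v/h) + u/h by ring, Real.exp_add]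
    field_simp
  -- integrability on the three regions
  have i1 : IntegrableOn (fun v : ℝ => checkFn τ v * ((1/h) * lapK ((v - u)/h)))
      (Set.Iic 0) := by
    exact IntegrableOn.congr_fun ((integrableOn_Iic_aux h 0 hh).const_mul
      ((τ - 1) * Real.exp (-(u/h)) / (2*h))) (fun v hv => (e1 v hv).symm) measurableSet_Iic
  have i2 : IntegrableOn (fun v : ℝ => checkFn τ v * ((1/h) * lapK ((v - u)/h)))
      (Set.Ioc 0 u) := by
    exact IntegrableOn.congr_fun (((integrableOn_Iic_aux h u hh).mono_set
      Set.Ioc_subset_Iic_self).const_mul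
      (τ * Real.exp (-(u/h)) / (2*h))) (fun v hv => (e2 v hv).symm) measurableSet_Ioc
  have i3 : IntegrableOn (fun v : ℝ => checkFn τ v * ((1/h) * lapK ((v - u)/h)))
      (Set.Ioi u) := by
    exact IntegrableOn.congr_fun ((integrableOn_Ioi_aux h u hh).const_mul
      (τ * Real.exp (u/h) / (2*h))) (fun v hv => (e3 v hv).symm) measurableSet_Ioi
  have hIoi : Set.Ioi (0:ℝ) = Set.Ioc 0 u ∪ Set.Ioi u := (Set.Ioc_union_Ioi_eq_Ioi hu).symm
  have i23 : IntegrableOn (fun v : ℝ => checkFn τ v * ((1/h) * lapK ((v - u)/h)))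
      (Set.Ioi 0) := by
    rw [hIoi]; exact i2.union i3
  -- split the integral
  rw [← intervalIntegral.integral_Iic_add_Ioi (b := (0:ℝ)) i1 i23]
  have hsplit2 : (∫ v in Set.Ioi (0:ℝ), checkFn τ v * ((1/h) * lapK ((v - u)/h)))
      = (∫ v in Set.Ioc (0:ℝ) u, checkFn τ v * ((1/h) * lapK ((v - u)/h)))
        + ∫ v in Set.Ioi u, checkFn τ v * ((1/h) * lapK ((v - u)/h)) := by
    rw [hIoi]
    exact setIntegral_union Set.Ioc_disjoint_Ioi_same measurableSet_Ioi i2 i3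
  rw [hsplit2]
  -- value of the middle integral
  have vmid : ∫ v in Set.Ioc (0:ℝ) u, v * Real.exp (v / h)
      = (h * u - h ^ 2) * Real.exp (u / h) + h ^ 2 := by
    have hsp : (∫ v in Set.Iic u, v * Real.exp (v / h))
        = (∫ v in Set.Iic (0:ℝ), v * Real.exp (v / h))
          + ∫ v in Set.Ioc (0:ℝ) u, v * Real.exp (v / h) := by
      rw [← Set.Iic_union_Ioc_eq_Iic hu]
      exact setIntegral_union (Set.Iic_disjoint_Ioc le_rfl) measurableSet_Ioc
        (integrableOn_Iic_aux h 0 hh)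
        ((integrableOn_Iic_aux h u hh).mono_set Set.Ioc_subset_Iic_self)
    rw [integral_Iic_aux h u hh, integral_Iic_aux h 0 hh] at hsp
    rw [show (h * 0 - h ^ 2) * Real.exp (0 / h) = -(h^2) by norm_num] at hsp
    linarith
  rw [setIntegral_congr_fun measurableSet_Iic e1,
    setIntegral_congr_fun measurableSet_Ioc e2,
    setIntegral_congr_fun measurableSet_Ioi e3,
    integral_const_mul, integral_const_mul, integral_const_mul,
    integral_Iic_aux h 0 hh, integral_Ioi_aux h u hh, vmid]
  have hcu : checkFn τ u = u * τ := by
    unfold checkFn; rw [if_neg (not_lt.2 hu)]; ring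
  rw [hcu, abs_of_nonneg hu, neg_div, Real.exp_neg]
  rw [show (h * 0 - h ^ 2) * Real.exp (0 / h) = -(h^2) by norm_num]
  field_simp
  ring

theorem smoothed_loss_laplacian (τ h : ℝ) (hτ : τ ∈ Set.Ioo (0:ℝ) 1) (hh : 0 < h) (u : ℝ) :
    (∫ v : ℝ, checkFn τ v * ((1/h) * lapK ((v - u)/h))) =
      checkFn τ u + (h/2) * Real.exp (-|u|/h) := by
  rcases le_or_gt 0 u with hu | hu
  · exact key_nonneg τ h u hh hu
  · have A : MeasurableEmbedding (fun x : ℝ => -x) :=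
      (Homeomorph.neg ℝ).isClosedEmbedding.measurableEmbedding
    have hneg : (∫ v : ℝ, checkFn τ v * ((1/h) * lapK ((v - u)/h)))
        = ∫ v : ℝ, checkFn (1-τ) v * ((1/h) * lapK ((v - (-u))/h)) := by
      have hm := A.integral_map (μ := (volume : Measure ℝ))
        (g := fun v : ℝ => checkFn τ v * ((1/h) * lapK ((v - u)/h)))
      rw [Measure.map_neg_eq_self] at hm
      rw [hm]
      congr 1
      funext x
      rw [check_neg τ x]
      congr 2
      rw [show (-x - u)/h = -((x - -u)/h) by ring]
      simp [lapK, abs_neg]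
    rw [hneg, key_nonneg (1-τ) h (-u) hh (by linarith)]
    rw [show checkFn (1-τ) (-u) = checkFn τ u by rw [check_neg (1-τ) u]; norm_num,
      abs_neg]
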